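/- Every two-dimensional commutative unital associative real algebra is isomorphic as an ℝ-algebra to exactly one of: ℂ (complex numbers), ℝ × ℝ (double numbers), or ℝ[ε] (dual numbers). -/

import Mathlib

/-!
Choose `z ∉ ℝ ∙ 1`, so that `1, z` is a basis; completing the square makes `z * z` a scalar, and
rescaling `z` makes it `-1`, `1` or `0`. A two-dimensional algebra with basis `1, z` is determined
by `z * z`, which gives `ℂ`, `ℝ × ℝ` or `ℝ[ε]`. These are pairwise non-isomorphic: `ℂ` is a domain
and `ℝ × ℝ` is not, and `ε` is a nonzero nilpotent while `ℂ` and `ℝ × ℝ` are reduced.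
-/

open Module

theorem LinearMap.map_mul_of_basis {ι K A B : Type*} [CommSemiring K] [Semiring A] [Algebra K A]
    [Semiring B] [Algebra K B] (b : Basis ι K A) (f : A →ₗ[K] B)
    (h : ∀ i j, f (b i * b j) = f (b i) * f (b j)) (x y : A) : f (x * y) = f x * f y :=
  (f.map_mul_iff.2 (LinearMap.ext_basis b b h)) x y

section TwoDimensional

variable {K A B : Type*} [Field K] [Ring A] [Algebra K A] [Ring B] [Algebra K B]

theorem nonempty_algEquiv_of_mul_self_eq (hA : finrank K A = 2) (hB : finrank K B = 2)
    {x : A} {y : B} (hx : LinearIndependent K ![1, x]) (hy : LinearIndependent K ![1, y]) {t : K}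
    (hxx : x * x = algebraMap K A t) (hyy : y * y = algebraMap K B t) :
    Nonempty (A ≃ₐ[K] B) := by
  let bA := basisOfLinearIndependentOfCardEqFinrank hx (by simp [hA])
  let bB := basisOfLinearIndependentOfCardEqFinrank hy (by simp [hB])
  let e := bA.equiv bB (Equiv.refl _)
  have he : ∀ i, e (bA i) = bB i := fun i => bA.equiv_apply i bB _
  have he1 : e 1 = 1 := by simpa [bA, bB] using he 0
  have hex : e x = y := by simpa [bA, bB] using he 1
  refine ⟨AlgEquiv.ofLinearEquiv e he1 (e.toLinearMap.map_mul_of_basis bA fun i j => ?_)⟩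
  fin_cases i <;> fin_cases j <;>
    simp [bA, hxx, hyy, he1, hex, Algebra.algebraMap_eq_smul_one]

theorem exists_mul_self_eq_algebraMap [NeZero (2 : K)] (h : finrank K A = 2) :
    ∃ z : A, LinearIndependent K ![1, z] ∧ ∃ t : K, z * z = algebraMap K A t := by
  have : Nontrivial A := Module.nontrivial_of_finrank_eq_succ h
  obtain ⟨w, hw⟩ := exists_linearIndependent_pair_of_one_lt_finrank (h ▸ one_lt_two) one_ne_zero
  have hspan : Submodule.span K {w, 1} = ⊤ := by
    simpa [Set.range_comp] using hw.span_eq_top_of_card_eq_finrank (by simp [h])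
  obtain ⟨a, b, hab⟩ := Submodule.mem_span_pair.1 (hspan ▸ Submodule.mem_top : w * w ∈ _)
  obtain ⟨c, rfl⟩ : ∃ c, a = c + c := ⟨a / 2, (add_halves a).symm⟩
  refine ⟨w - c • 1, ?_, b + c ^ 2, ?_⟩
  · simpa [sub_eq_neg_add] using (LinearIndependent.pair_add_smul_add_smul_iff (x := (1 : A))
      (y := w) (1 : K) 0 (-c) 1).2 ⟨hw, by simp⟩
  · have hsq : (w - c • 1) * (w - c • 1) = w * w - (c + c) • w + c ^ 2 • (1 : A) := by
      simp only [sub_mul, mul_sub, smul_mul_assoc, mul_smul_comm, one_mul, mul_one]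
      module
    rw [hsq, ← hab, Algebra.algebraMap_eq_smul_one]
    module

end TwoDimensional

theorem DualNumber.finrank_eq_two (K : Type*) [Field K] : finrank K (DualNumber K) = 2 :=
  (finrank_prod (R := K) (M := K) (M' := K)).trans (by simp)

theorem DualNumber.linearIndependent_one_eps {R : Type*} [CommRing R] :
    LinearIndependent R ![1, (DualNumber.eps : DualNumber R)] := by
  refine LinearIndependent.pair_iff.2 fun s t hst => ⟨?_, ?_⟩
  · simpa using congrArg TrivSqZeroExt.fst hst
  · simpa using congrArg TrivSqZeroExt.snd hst

theorem DualNumber.not_isReduced {R : Type*} [CommSemiring R] [Nontrivial R] :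
    ¬ IsReduced (DualNumber R) := fun _ =>
  have heps : (DualNumber.eps : DualNumber R) = 0 := IsReduced.eq_zero _ ⟨2, by simp [sq]⟩
  one_ne_zero (congrArg TrivSqZeroExt.snd heps)

theorem Complex.linearIndependent_one_I : LinearIndependent ℝ ![1, I] := by
  simpa using basisOneI.linearIndependent

theorem Prod.linearIndependent_one_one_neg_one : LinearIndependent ℝ ![(1 : ℝ × ℝ), (1, -1)] := by
  refine LinearIndependent.pair_iff.2 fun s t hst => ?_
  have h1 : s + t = 0 := by simpa using congrArg Prod.fst hst
  have h2 : s - t = 0 := by simpa [sub_eq_add_neg] using congrArg Prod.snd hst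
  constructor <;> linarith

theorem exists_mul_self_eq_neg_one_or_one_or_zero {A : Type*} [Ring A] [Algebra ℝ A]
    {z : A} (hz : LinearIndependent ℝ ![1, z]) {t : ℝ} (hzz : z * z = algebraMap ℝ A t) :
    ∃ z : A, LinearIndependent ℝ ![1, z] ∧
      ∃ t : ℝ, z * z = algebraMap ℝ A t ∧ (t = -1 ∨ t = 1 ∨ t = 0) := by
  have rescale (r : ℝ) (hr : r ≠ 0) : LinearIndependent ℝ ![1, r • z] ∧
      (r • z) * (r • z) = algebraMap ℝ A (r * r * t) := by
    refine ⟨by simpa using (LinearIndependent.pair_add_smul_add_smul_iff (x := (1 : A)) (y := z)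
      (1 : ℝ) 0 0 r).2 ⟨hz, by simpa⟩, ?_⟩
    rw [smul_mul_smul_comm, hzz, map_mul, Algebra.smul_def]
  rcases lt_trichotomy t 0 with ht | rfl | ht
  · have hr : (√(-t))⁻¹ * (√(-t))⁻¹ * t = -1 := by
      rw [← mul_inv, Real.mul_self_sqrt (by linarith), inv_neg, neg_mul, inv_mul_cancel₀ ht.ne]
    obtain ⟨h1, h2⟩ := rescale (√(-t))⁻¹ (inv_ne_zero (Real.sqrt_ne_zero'.2 (neg_pos.2 ht)))
    exact ⟨_, h1, -1, hr ▸ h2, by simp⟩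
  · exact ⟨z, hz, 0, hzz, by simp⟩
  · have hr : (√t)⁻¹ * (√t)⁻¹ * t = 1 := by
      rw [← mul_inv, Real.mul_self_sqrt ht.le, inv_mul_cancel₀ ht.ne']
    obtain ⟨h1, h2⟩ := rescale (√t)⁻¹ (inv_ne_zero (Real.sqrt_ne_zero'.2 ht))
    exact ⟨_, h1, 1, hr ▸ h2, by simp⟩

theorem nonempty_algEquiv_complex_or_prod_or_dualNumber {A : Type*} [Ring A] [Algebra ℝ A]
    (h : finrank ℝ A = 2) :
    Nonempty (A ≃ₐ[ℝ] ℂ) ∨ Nonempty (A ≃ₐ[ℝ] (ℝ × ℝ)) ∨ Nonempty (A ≃ₐ[ℝ] DualNumber ℝ) := by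
  obtain ⟨z₀, hz₀, t₀, hzz₀⟩ := exists_mul_self_eq_algebraMap h
  obtain ⟨z, hz, t, hzz, rfl | rfl | rfl⟩ := exists_mul_self_eq_neg_one_or_one_or_zero hz₀ hzz₀
  · exact .inl <| nonempty_algEquiv_of_mul_self_eq h Complex.finrank_real_complex hz
      Complex.linearIndependent_one_I hzz (by simp)
  · exact .inr <| .inl <| nonempty_algEquiv_of_mul_self_eq h (by simp) hz
      Prod.linearIndependent_one_one_neg_one hzz (by simp)
  · exact .inr <| .inr <| nonempty_algEquiv_of_mul_self_eq h (DualNumber.finrank_eq_two ℝ) hz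
      DualNumber.linearIndependent_one_eps hzz (by simp)

theorem two_dim_real_comm_algebra_classification (A : Type) [CommRing A] [Algebra ℝ A]
    (h2 : Module.finrank ℝ A = 2) :
    (Nonempty (A ≃ₐ[ℝ] ℂ) ∨ Nonempty (A ≃ₐ[ℝ] (ℝ × ℝ)) ∨ Nonempty (A ≃ₐ[ℝ] DualNumber ℝ)) ∧
    ¬ (Nonempty (A ≃ₐ[ℝ] ℂ) ∧ Nonempty (A ≃ₐ[ℝ] (ℝ × ℝ))) ∧
    ¬ (Nonempty (A ≃ₐ[ℝ] ℂ) ∧ Nonempty (A ≃ₐ[ℝ] DualNumber ℝ)) ∧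
    ¬ (Nonempty (A ≃ₐ[ℝ] (ℝ × ℝ)) ∧ Nonempty (A ≃ₐ[ℝ] DualNumber ℝ)) := by
  refine ⟨nonempty_algEquiv_complex_or_prod_or_dualNumber h2, ?_, ?_, ?_⟩ <;> rintro ⟨⟨e⟩, ⟨f⟩⟩
  · have := (f.symm.trans e).toMulEquiv.isDomain ℂ
    exact false_of_nontrivial_of_product_domain ℝ ℝ
  all_goals exact DualNumber.not_isReduced (isReduced_of_injective _ (f.symm.trans e).injective)
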